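/- Let γ be a translation-invariant Gibbsian specification on Ω = E^ℤ and φ_γ the associated potential. Then for all a_0, b_0 ∈ E, n ∈ ℕ and ω ∈ Ω, Σ_{i=−n}^{n} [φ_γ(S^i(ω^{b_0})) − φ_γ(S^i(ω^{a_0}))] = log [ γ_{{0}}(b_0 | 𝐚_{−∞}^{−n−1} ω_{−n}^{−1} ω_1^{∞}) / γ_{{0}}(a_0 | 𝐚_{−∞}^{−n−1} ω_{−n}^{−1} ω_1^{∞}) ], and as n → ∞ this converges uniformly in ω ∈ Ω to log [ γ_{{0}}(b_0 | ω_{ℤ∖{0}}) / γ_{{0}}(a_0 | ω_{ℤ∖{0}}) ]. -/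

import Mathlib

open Filter Topology MeasureTheory

namespace GP

/-- The configuration space `Ω = E^ℤ`. -/
abbrev Conf (E : Type*) := ℤ → E

variable {E : Type*}

/-- The shift by `i`: `(shiftZ i ω) k = ω (k + i)`.  The left shift `S` is `shiftZ 1`. -/
def shiftZ (i : ℤ) (ω : Conf E) : Conf E := fun k => ω (k + i)

/-- The cylinder set determined by a word `w ∈ E^n` (placed on coordinates `0,…,n-1`). -/
def cylW {n : ℕ} (w : Fin n → E) : Set (Conf E) := {ω | ∀ j : Fin n, ω ((j : ℕ) : ℤ) = w j}

/-- The cylinder set `[ω_0^{n-1}]`. -/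
def cylPt (ω : Conf E) (n : ℕ) : Set (Conf E) :=
  {ω' | ∀ j : ℕ, j < n → ω' (j : ℤ) = ω (j : ℤ)}

/-- Birkhoff sum `S_n φ = ∑_{k=0}^{n-1} φ ∘ S^k`. -/
def birk (φ : Conf E → ℝ) (n : ℕ) (ω : Conf E) : ℝ :=
  ∑ k ∈ Finset.range n, φ (shiftZ (k : ℤ) ω)

/-- Topological pressure of `φ` on the full shift:
`P(φ) = lim_n (1/n) log ∑_{w ∈ E^n} sup_{ω ∈ [w]} exp (S_n φ (ω))`
(the limit exists; we use `limsup` as the defining expression). -/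
noncomputable def press [Fintype E] (φ : Conf E → ℝ) : ℝ :=
  Filter.limsup (fun n : ℕ =>
    Real.log (∑ w : Fin n → E, sSup ((fun ω => Real.exp (birk φ n ω)) '' cylW w)) / n) atTop

/-- Kolmogorov–Sinai entropy of a shift-invariant measure on the full shift,
computed along the canonical generating partition into cylinders
(the limit exists; we use `limsup` as the defining expression). -/
noncomputable def ent [Fintype E] [MeasurableSpace E] (μ : Measure (Conf E)) : ℝ :=
  Filter.limsup (fun n : ℕ =>
    (- ∑ w : Fin n → E, ((μ (cylW w)).toReal * Real.log (μ (cylW w)).toReal)) / n) atTop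

/-- Shift invariance of a measure. -/
def ShiftInv [MeasurableSpace E] (μ : Measure (Conf E)) : Prop :=
  Measure.map (shiftZ 1) μ = μ

/-- `μ` is an equilibrium state for `φ`: `μ` is a shift-invariant Borel probability
measure with `h(μ) + ∫ φ dμ = P(φ)`. -/
def IsEquilibrium [Fintype E] [MeasurableSpace E] (φ : Conf E → ℝ)
    (μ : Measure (Conf E)) : Prop :=
  IsProbabilityMeasure μ ∧ ShiftInv μ ∧ ent μ + ∫ ω, φ ω ∂μ = press φ

/-- `ω^c`: the configuration equal to `c` at site `0` and to `ω` elsewhere. -/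
def upd0 (ω : Conf E) (c : E) : Conf E := Function.update ω 0 c

/-- Partial sums `ρ_n(ξ,η) = ∑_{i=-n}^{n} (φ(S^i ξ) - φ(S^i η))`. -/
noncomputable def rhoN (φ : Conf E → ℝ) (ξ η : Conf E) (n : ℕ) : ℝ :=
  ∑ i ∈ Finset.Icc (-(n : ℤ)) (n : ℤ), (φ (shiftZ i ξ) - φ (shiftZ i η))

/-- `φ` has the extensibility property: for all `a b ∈ E`, the functions
`ω ↦ ∑_{i=-n}^{n} (φ(S^i(ω^b)) - φ(S^i(ω^a)))` converge uniformly as `n → ∞`. -/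
def Extensible (φ : Conf E → ℝ) : Prop :=
  ∀ a b : E, ∃ r : Conf E → ℝ,
    TendstoUniformly (fun n ω => rhoN φ (upd0 ω b) (upd0 ω a) n) r atTop

/-- The cocycle `ρ^φ(ξ,η) = lim_n ∑_{i=-n}^{n} (φ(S^i ξ) - φ(S^i η))`. -/
noncomputable def rho (φ : Conf E → ℝ) (ξ η : Conf E) : ℝ :=
  limUnder atTop (rhoN φ ξ η)

/-- `ξ` and `η` differ in at most finitely many coordinates. -/
def FinDiff (ξ η : Conf E) : Prop := {k : ℤ | ξ k ≠ η k}.Finite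

/-- `ovr Λ ξ ω` is the configuration `ξ_Λ ω_{ℤ∖Λ}`, equal to `ξ` on `Λ` and to `ω` off `Λ`. -/
def ovr (Λ : Finset ℤ) (ξ : {k // k ∈ Λ} → E) (ω : Conf E) : Conf E :=
  fun k => if h : k ∈ Λ then ξ ⟨k, h⟩ else ω k

/-- `γ` is a specification: each `γ_Λ(·|ω_{Λ^c})` is a probability distribution on `E^Λ`,
and the family is consistent (`γ_Λ = γ_Λ ∘ γ_V` for `V ⊆ Λ`); here `γ Λ ω` denotes
`γ_Λ(ω_Λ | ω_{Λ^c})`. -/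
def IsSpecification [Fintype E] (γ : Finset ℤ → Conf E → ℝ) : Prop :=
  (∀ (Λ : Finset ℤ) (ω : Conf E), 0 ≤ γ Λ ω) ∧
  (∀ (Λ : Finset ℤ) (ω : Conf E), ∑ ξ : {k // k ∈ Λ} → E, γ Λ (ovr Λ ξ ω) = 1) ∧
  (∀ V Λ : Finset ℤ, V ⊆ Λ → ∀ ω : Conf E,
     γ Λ ω = (∑ η : {k // k ∈ V} → E, γ Λ (ovr V η ω)) * γ V ω)

/-- Non-nullness: `inf_ω γ_Λ(ω_Λ|ω_{Λ^c}) > 0` for every finite `Λ`. -/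
def NonNull (γ : Finset ℤ → Conf E → ℝ) : Prop :=
  ∀ Λ : Finset ℤ, ∃ c > (0 : ℝ), ∀ ω : Conf E, c ≤ γ Λ ω

/-- Continuity (quasilocality): `ω ↦ γ_Λ(ω_Λ|ω_{Λ^c})` is continuous for every finite `Λ`. -/
def ContSpec [TopologicalSpace E] (γ : Finset ℤ → Conf E → ℝ) : Prop :=
  ∀ Λ : Finset ℤ, Continuous (γ Λ)

/-- A Gibbsian specification: a non-null continuous specification. -/
def IsGibbsSpec [Fintype E] [TopologicalSpace E] (γ : Finset ℤ → Conf E → ℝ) : Prop :=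
  IsSpecification γ ∧ NonNull γ ∧ ContSpec γ

/-- Translation invariance of a specification: `γ_{Λ+1} = γ_Λ ∘ S`. -/
def SpecTI (γ : Finset ℤ → Conf E → ℝ) : Prop :=
  ∀ (Λ : Finset ℤ) (ω : Conf E), γ (Λ.image (· + 1)) ω = γ Λ (shiftZ 1 ω)

/-- `μ` is a DLR-Gibbs measure for the specification `γ`: `μ` is a Borel probability
measure satisfying the DLR equations `∫ γ_Λ(f|·) dμ = ∫ f dμ` for every finite `Λ`
and every continuous `f` (equivalently, each `γ_Λ` is a version of the conditional
probabilities of `μ`). -/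
def IsDLRGibbs [Fintype E] [MeasurableSpace E] [TopologicalSpace E]
    (γ : Finset ℤ → Conf E → ℝ) (μ : Measure (Conf E)) : Prop :=
  IsProbabilityMeasure μ ∧
  ∀ (Λ : Finset ℤ) (f : Conf E → ℝ), Continuous f →
    ∫ ω, (∑ ξ : {k // k ∈ Λ} → E, γ Λ (ovr Λ ξ ω) * f (ovr Λ ξ ω)) ∂μ = ∫ ω, f ω ∂μ

/-- The specification `γ^φ` associated with an extensible potential `φ`:
`γ^φ_Λ(ω_Λ|ω_{Λ^c}) = (∑_{ξ_Λ ∈ E^Λ} exp ρ^φ(ξ_Λ ω_{ℤ∖Λ}, ω))⁻¹`. -/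
noncomputable def specOf [Fintype E] (φ : Conf E → ℝ) : Finset ℤ → Conf E → ℝ :=
  fun Λ ω => (∑ ξ : {k // k ∈ Λ} → E, Real.exp (rho φ (ovr Λ ξ ω) ω))⁻¹

/-- The configuration `𝐚_{-∞}^{-1} b ω_1^{∞}`: equal to `a` at all negative
coordinates, to `b` at coordinate `0`, and to `ω` at positive coordinates. -/
def bca (a : E) (ω : Conf E) (b : E) : Conf E :=
  fun k => if k < 0 then a else if k = 0 then b else ω k

/-- The potential associated with a specification:
`φ_γ(ω) = log (γ_{{0}}(ω_0 | 𝐚_{-∞}^{-1} ω_1^{∞}) / γ_{{0}}(a | 𝐚_{-∞}^{-1} ω_1^{∞}))`. -/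
noncomputable def phiOf (γ : Finset ℤ → Conf E → ℝ) (a : E) (ω : Conf E) : ℝ :=
  Real.log (γ ({0} : Finset ℤ) (bca a ω (ω 0)) / γ ({0} : Finset ℤ) (bca a ω a))

/-- `μ` is weak Bowen-Gibbs for `φ` with constant `P`. -/
def WeakBowenGibbs [MeasurableSpace E] (μ : Measure (Conf E)) (φ : Conf E → ℝ)
    (P : ℝ) : Prop :=
  ∃ C : ℕ → ℝ, (∀ n, 0 < C n) ∧
    Tendsto (fun n : ℕ => Real.log (C n) / n) atTop (𝓝 0) ∧
    ∀ (n : ℕ) (ω : Conf E),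
      (C n)⁻¹ ≤ (μ (cylPt ω n)).toReal / Real.exp (birk φ n ω - n * P) ∧
      (μ (cylPt ω n)).toReal / Real.exp (birk φ n ω - n * P) ≤ C n

/-!
The sum telescopes. The terms with `i > 0` vanish because `φ_γ` only reads coordinates `≥ 0`.
By translation invariance the term at `i = -m` is a difference of log-ratios of `γ_{{-m}}`
between the boundary conditions `𝐚` left of `-m` and `𝐚` left of `-m + 1`, and consistency of
`γ` on `{-m, 0}` converts it into the increment, from `n = m - 1` to `n = m`, of the log-ratio of
`γ_{{0}}` with boundary condition `𝐚` left of `-n`. The limit is uniform because `γ_{{0}}` is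
uniformly continuous on the compact space `E^ℤ`, while imposing `𝐚` left of `-n` converges
uniformly to the identity in the product uniformity.
-/

section

open Real

@[simp]
lemma shiftZ_zero (ω : Conf E) : shiftZ 0 ω = ω := by
  funext k; simp [shiftZ]

lemma shiftZ_shiftZ (i j : ℤ) (ω : Conf E) : shiftZ i (shiftZ j ω) = shiftZ (i + j) ω := by
  funext k; simp only [shiftZ, add_assoc]

lemma ovr_congr {Λ : Finset ℤ} (θ : {k // k ∈ Λ} → E) {ξ η : Conf E}
    (h : ∀ k ∉ Λ, ξ k = η k) : ovr Λ θ ξ = ovr Λ θ η := by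
  funext k
  by_cases hk : k ∈ Λ
  · simp only [ovr, dif_pos hk]
  · simp only [ovr, dif_neg hk, h k hk]

lemma rhoN_zero (φ : Conf E → ℝ) (ξ η : Conf E) : rhoN φ ξ η 0 = φ ξ - φ η := by
  simp [rhoN]

lemma rhoN_succ (φ : Conf E → ℝ) (ξ η : Conf E) (n : ℕ) :
    rhoN φ ξ η (n + 1) = rhoN φ ξ η n
      + (φ (shiftZ (-((n + 1 : ℕ) : ℤ)) ξ) - φ (shiftZ (-((n + 1 : ℕ) : ℤ)) η))
      + (φ (shiftZ ((n + 1 : ℕ) : ℤ) ξ) - φ (shiftZ ((n + 1 : ℕ) : ℤ) η)) := by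
  have hIcc : Finset.Icc (-((n + 1 : ℕ) : ℤ)) ((n + 1 : ℕ) : ℤ)
      = insert (-((n + 1 : ℕ) : ℤ)) (insert ((n + 1 : ℕ) : ℤ) (Finset.Icc (-(n : ℤ)) n)) := by
    ext k; simp only [Finset.mem_Icc, Finset.mem_insert]; omega
  have h₁ : ((n + 1 : ℕ) : ℤ) ∉ Finset.Icc (-(n : ℤ)) n := by
    simp only [Finset.mem_Icc]; omega
  have h₂ : -((n + 1 : ℕ) : ℤ) ∉ insert ((n + 1 : ℕ) : ℤ) (Finset.Icc (-(n : ℤ)) n) := by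
    simp only [Finset.mem_insert, Finset.mem_Icc]; omega
  rw [rhoN, hIcc, Finset.sum_insert h₂, Finset.sum_insert h₁, rhoN]
  ring

@[simp]
lemma upd0_apply_zero (ω : Conf E) (c : E) : upd0 ω c 0 = c :=
  Function.update_self ..

lemma upd0_apply_of_ne (ω : Conf E) (c : E) {k : ℤ} (hk : k ≠ 0) : upd0 ω c k = ω k :=
  Function.update_of_ne hk ..

/-- `𝐚_{-∞}^{-n-1} ω_{-n}^{∞}`. -/
def truncLeft (a : E) (n : ℕ) (ω : Conf E) : Conf E :=
  fun k => if k < -(n : ℤ) then a else ω k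

lemma truncLeft_succ_apply_of_ne (a : E) (n : ℕ) (ω : Conf E) {k : ℤ}
    (hk : k ≠ -((n + 1 : ℕ) : ℤ)) : truncLeft a (n + 1) ω k = truncLeft a n ω k := by
  simp only [truncLeft]
  split_ifs <;> first | rfl | omega

lemma truncLeft_upd0 (a : E) (n : ℕ) (ω : Conf E) (c : E) :
    truncLeft a n (upd0 ω c) = upd0 (truncLeft a n ω) c := by
  funext k
  simp only [truncLeft, upd0, Function.update_apply]
  split_ifs <;> first | rfl | omega

lemma upd0_truncLeft (a : E) (n : ℕ) (ω : Conf E) (c : E) :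
    upd0 (truncLeft a n ω) c = fun k => if k < -(n : ℤ) then a else if k = 0 then c else ω k := by
  funext k
  simp only [truncLeft, upd0, Function.update_apply]
  split_ifs <;> first | rfl | omega

lemma bca_upd0 (a : E) (ω : Conf E) (c x : E) :
    bca a (upd0 ω c) x = upd0 (truncLeft a 0 ω) x := by
  funext k
  simp only [bca, truncLeft, upd0, Function.update_apply]
  split_ifs <;> first | rfl | omega

lemma shiftZ_bca_shiftZ_neg_apply (a : E) (n : ℕ) (ξ : Conf E) :
    shiftZ ((n + 1 : ℕ) : ℤ) (bca a (shiftZ (-((n + 1 : ℕ) : ℤ)) ξ) (ξ (-((n + 1 : ℕ) : ℤ))))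
      = truncLeft a (n + 1) ξ := by
  funext k
  simp only [shiftZ, bca, truncLeft, add_neg_cancel_right]
  split_ifs <;> first | rfl | omega | (congr 1; omega)

lemma shiftZ_bca_shiftZ_neg_self (a : E) (n : ℕ) (ξ : Conf E) :
    shiftZ ((n + 1 : ℕ) : ℤ) (bca a (shiftZ (-((n + 1 : ℕ) : ℤ)) ξ) a) = truncLeft a n ξ := by
  funext k
  simp only [shiftZ, bca, truncLeft, add_neg_cancel_right]
  split_ifs <;> first | rfl | omega

lemma tendstoUniformly_truncLeft [UniformSpace E] (a : E) :
    TendstoUniformly (fun n => truncLeft a n) id atTop := by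
  rw [tendstoUniformly_iff_tendsto, Pi.uniformity, tendsto_iInf]
  intro k
  rw [tendsto_comap_iff]
  refine (tendsto_diag_uniformity (fun q : ℕ × Conf E => q.2 k) _).congr' ?_
  filter_upwards [(eventually_ge_atTop k.natAbs).prod_inl ⊤] with q hq
  simp only [Function.comp_apply, id, truncLeft]
  rw [if_neg (by omega)]

lemma tendstoUniformly_comp_truncLeft [TopologicalSpace E] [DiscreteTopology E] [Finite E]
    {β : Type*} [UniformSpace β] (a : E) {H : Conf E → β} (hH : Continuous H) :
    TendstoUniformly (fun n ω => H (truncLeft a n ω)) H atTop := by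
  obtain rfl : ‹TopologicalSpace E› = ⊥ := DiscreteTopology.eq_bot
  let _ : UniformSpace E := ⊥
  exact (CompactSpace.uniformContinuous_of_continuous hH).comp_tendstoUniformly
    (tendstoUniformly_truncLeft a)

variable {γ : Finset ℤ → Conf E → ℝ}

lemma NonNull.pos (hnn : NonNull γ) (Λ : Finset ℤ) (ω : Conf E) : 0 < γ Λ ω := by
  obtain ⟨c, hc, h⟩ := hnn Λ
  exact hc.trans_le (h ω)

lemma SpecTI.image_add_natCast (hTI : SpecTI γ) (m : ℕ) (Λ : Finset ℤ) (ω : Conf E) :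
    γ (Λ.image (· + (m : ℤ))) ω = γ Λ (shiftZ m ω) := by
  induction m generalizing ω with
  | zero => simp
  | succ m ih =>
    have himage : Λ.image (· + ((m + 1 : ℕ) : ℤ)) = (Λ.image (· + (m : ℤ))).image (· + 1) := by
      rw [Finset.image_image]; congr 1; funext k; simp only [Function.comp_apply]; push_cast; ring
    rw [himage, hTI, ih, shiftZ_shiftZ, Nat.cast_succ, add_comm (m : ℤ)]

lemma SpecTI.singleton_neg (hTI : SpecTI γ) (m : ℕ) (ω : Conf E) :
    γ {-(m : ℤ)} (shiftZ m ω) = γ {0} ω := by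
  rw [← hTI.image_add_natCast, Finset.image_singleton, neg_add_cancel]

lemma IsSpecification.log_sub_log_eq_singleton [Fintype E] (hγ : IsSpecification γ)
    (hnn : NonNull γ) {Λ : Finset ℤ} {j : ℤ} (hj : j ∈ Λ) {ξ η : Conf E}
    (hξη : ∀ k ≠ j, ξ k = η k) :
    log (γ Λ ξ) - log (γ Λ η) = log (γ {j} ξ) - log (γ {j} η) := by
  have hsub : {j} ⊆ Λ := Finset.singleton_subset_iff.2 hj
  set Z := ∑ θ : {k // k ∈ ({j} : Finset ℤ)} → E, γ Λ (ovr {j} θ η)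
  have hξ : γ Λ ξ = Z * γ {j} ξ := by
    rw [hγ.2.2 {j} Λ hsub ξ]
    congr 1
    exact Finset.sum_congr rfl fun θ _ =>
      congrArg _ (ovr_congr θ fun k hk => hξη k (by simpa using hk))
  have hη : γ Λ η = Z * γ {j} η := hγ.2.2 {j} Λ hsub η
  have hZ : 0 < Z := pos_of_mul_pos_left (hη ▸ hnn.pos Λ η) (hnn.pos {j} η).le
  rw [hξ, hη, log_mul hZ.ne' (hnn.pos _ _).ne', log_mul hZ.ne' (hnn.pos _ _).ne']
  ring

-- Both sides are the same alternating sum of `log γ_{{i,j}}` around the square.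
lemma IsSpecification.log_ratio_square [Fintype E] (hγ : IsSpecification γ) (hnn : NonNull γ)
    {i j : ℤ} {x₁ x₂ x₃ x₄ : Conf E}
    (h₁₂ : ∀ k ≠ i, x₁ k = x₂ k) (h₃₄ : ∀ k ≠ i, x₃ k = x₄ k)
    (h₁₃ : ∀ k ≠ j, x₁ k = x₃ k) (h₂₄ : ∀ k ≠ j, x₂ k = x₄ k) :
    log (γ {i} x₁) - log (γ {i} x₂) - (log (γ {i} x₃) - log (γ {i} x₄)) =
      log (γ {j} x₁) - log (γ {j} x₃) - (log (γ {j} x₂) - log (γ {j} x₄)) := by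
  have hi : i ∈ ({i, j} : Finset ℤ) := by simp
  have hj : j ∈ ({i, j} : Finset ℤ) := by simp
  have := hγ.log_sub_log_eq_singleton hnn hi h₁₂
  have := hγ.log_sub_log_eq_singleton hnn hi h₃₄
  have := hγ.log_sub_log_eq_singleton hnn hj h₁₃
  have := hγ.log_sub_log_eq_singleton hnn hj h₂₄
  linarith

lemma phiOf_eq_log_sub_log (hnn : NonNull γ) (a : E) (ν : Conf E) :
    phiOf γ a ν = log (γ {0} (bca a ν (ν 0))) - log (γ {0} (bca a ν a)) :=
  log_div (hnn.pos _ _).ne' (hnn.pos _ _).ne'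

lemma phiOf_congr (a : E) {ν ν' : Conf E} (h : ∀ k, 0 ≤ k → ν k = ν' k) :
    phiOf γ a ν = phiOf γ a ν' := by
  have hbca : ∀ x : E, bca a ν x = bca a ν' x := by
    intro x; funext k
    simp only [bca]
    split_ifs <;> first | rfl | exact h k (by omega)
  rw [phiOf, phiOf, hbca, hbca, h 0 le_rfl]

lemma phiOf_upd0 (hnn : NonNull γ) (a : E) (ω : Conf E) (c : E) :
    phiOf γ a (upd0 ω c) =
      log (γ {0} (upd0 (truncLeft a 0 ω) c)) - log (γ {0} (upd0 (truncLeft a 0 ω) a)) := by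
  rw [phiOf_eq_log_sub_log hnn, bca_upd0, bca_upd0, upd0_apply_zero]

lemma phiOf_shiftZ_neg (hnn : NonNull γ) (hTI : SpecTI γ) (a : E) (n : ℕ) (ξ : Conf E) :
    phiOf γ a (shiftZ (-((n + 1 : ℕ) : ℤ)) ξ) =
      log (γ {-((n + 1 : ℕ) : ℤ)} (truncLeft a (n + 1) ξ))
        - log (γ {-((n + 1 : ℕ) : ℤ)} (truncLeft a n ξ)) := by
  have hν₀ : shiftZ (-((n + 1 : ℕ) : ℤ)) ξ 0 = ξ (-((n + 1 : ℕ) : ℤ)) := by simp [shiftZ]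
  rw [phiOf_eq_log_sub_log hnn, hν₀, ← shiftZ_bca_shiftZ_neg_apply, ← shiftZ_bca_shiftZ_neg_self,
    hTI.singleton_neg, hTI.singleton_neg]

lemma phiOf_shiftZ_upd0 (a : E) (n : ℕ) (ω : Conf E) (b c : E) :
    phiOf γ a (shiftZ ((n + 1 : ℕ) : ℤ) (upd0 ω b)) =
      phiOf γ a (shiftZ ((n + 1 : ℕ) : ℤ) (upd0 ω c)) :=
  phiOf_congr a fun k hk => by
    simp only [shiftZ]
    rw [upd0_apply_of_ne _ _ (by omega), upd0_apply_of_ne _ _ (by omega)]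

theorem rhoN_phiOf_upd0 [Fintype E] (hγ : IsSpecification γ) (hnn : NonNull γ) (hTI : SpecTI γ)
    (a a₀ b₀ : E) (n : ℕ) (ω : Conf E) :
    rhoN (phiOf γ a) (upd0 ω b₀) (upd0 ω a₀) n =
      log (γ {0} (upd0 (truncLeft a n ω) b₀)) - log (γ {0} (upd0 (truncLeft a n ω) a₀)) := by
  induction n with
  | zero =>
    rw [rhoN_zero, phiOf_upd0 hnn, phiOf_upd0 hnn]
    ring
  | succ n ih =>
    rw [rhoN_succ, ih, phiOf_shiftZ_neg hnn hTI, phiOf_shiftZ_neg hnn hTI,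
      phiOf_shiftZ_upd0 a n ω b₀ a₀, truncLeft_upd0, truncLeft_upd0, truncLeft_upd0, truncLeft_upd0]
    have hsquare := hγ.log_ratio_square hnn (i := -((n + 1 : ℕ) : ℤ)) (j := 0)
      (x₁ := upd0 (truncLeft a (n + 1) ω) b₀) (x₂ := upd0 (truncLeft a n ω) b₀)
      (x₃ := upd0 (truncLeft a (n + 1) ω) a₀) (x₄ := upd0 (truncLeft a n ω) a₀)
      (fun k hk => by simp only [upd0, Function.update_apply, truncLeft_succ_apply_of_ne a n ω hk])
      (fun k hk => by simp only [upd0, Function.update_apply, truncLeft_succ_apply_of_ne a n ω hk])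
      (fun k hk => by rw [upd0_apply_of_ne _ _ hk, upd0_apply_of_ne _ _ hk])
      (fun k hk => by rw [upd0_apply_of_ne _ _ hk, upd0_apply_of_ne _ _ hk])
    linarith

end

theorem rhoN_phiOf_eq_log_ratio_general [Fintype E] [TopologicalSpace E] [DiscreteTopology E]
    (γ : Finset ℤ → Conf E → ℝ) (hγ : IsGibbsSpec γ) (hTI : SpecTI γ) (a : E)
    (a₀ b₀ : E) :
    (∀ (n : ℕ) (ω : Conf E),
      rhoN (phiOf γ a) (upd0 ω b₀) (upd0 ω a₀) n =
        Real.log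
          (γ ({0} : Finset ℤ) (fun k => if k < -(n : ℤ) then a else if k = 0 then b₀ else ω k) /
           γ ({0} : Finset ℤ) (fun k => if k < -(n : ℤ) then a else if k = 0 then a₀ else ω k))) ∧
    TendstoUniformly (fun (n : ℕ) (ω : Conf E) => rhoN (phiOf γ a) (upd0 ω b₀) (upd0 ω a₀) n)
      (fun ω => Real.log (γ ({0} : Finset ℤ) (upd0 ω b₀) / γ ({0} : Finset ℤ) (upd0 ω a₀)))
      atTop := by
  obtain ⟨hspec, hnn, hcont⟩ := hγ
  have hrhoN : ∀ n ω, rhoN (phiOf γ a) (upd0 ω b₀) (upd0 ω a₀) n =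
      Real.log (γ {0} (upd0 (truncLeft a n ω) b₀) / γ {0} (upd0 (truncLeft a n ω) a₀)) := by
    intro n ω
    rw [rhoN_phiOf_upd0 hspec hnn hTI, Real.log_div (hnn.pos _ _).ne' (hnn.pos _ _).ne']
  refine ⟨fun n ω => by rw [hrhoN, upd0_truncLeft, upd0_truncLeft], ?_⟩
  simp only [hrhoN]
  have hupd0 : ∀ c : E, Continuous fun ω : Conf E => upd0 ω c := fun c =>
    continuous_id.update 0 continuous_const
  refine tendstoUniformly_comp_truncLeft a (Continuous.log ?_ fun ω => ?_)
  · exact ((hcont {0}).comp (hupd0 b₀)).div ((hcont {0}).comp (hupd0 a₀))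
      fun ω => (hnn.pos _ _).ne'
  · exact (div_pos (hnn.pos _ _) (hnn.pos _ _)).ne'

/-- For a translation-invariant Gibbsian specification `γ` with
associated potential `φ_γ`, for all `a₀, b₀ ∈ E`, `n` and `ω`,
`∑_{i=-n}^{n} (φ_γ(S^i(ω^{b₀})) - φ_γ(S^i(ω^{a₀})))` equals
`log (γ_{{0}}(b₀|𝐚_{-∞}^{-n-1}ω_{-n}^{-1}ω_1^∞) / γ_{{0}}(a₀|𝐚_{-∞}^{-n-1}ω_{-n}^{-1}ω_1^∞))`,
and as `n → ∞` this converges uniformly in `ω` to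
`log (γ_{{0}}(b₀|ω_{ℤ∖{0}}) / γ_{{0}}(a₀|ω_{ℤ∖{0}}))`. -/
theorem rhoN_phiOf_eq_log_ratio [Fintype E] [Nonempty E] [TopologicalSpace E] [DiscreteTopology E]
    [MeasurableSpace E] [MeasurableSingletonClass E]
    (γ : Finset ℤ → Conf E → ℝ) (hγ : IsGibbsSpec γ) (hTI : SpecTI γ) (a : E)
    (a₀ b₀ : E) :
    (∀ (n : ℕ) (ω : Conf E),
      rhoN (phiOf γ a) (upd0 ω b₀) (upd0 ω a₀) n =
        Real.log
          (γ ({0} : Finset ℤ) (fun k => if k < -(n : ℤ) then a else if k = 0 then b₀ else ω k) /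
           γ ({0} : Finset ℤ) (fun k => if k < -(n : ℤ) then a else if k = 0 then a₀ else ω k))) ∧
    TendstoUniformly (fun (n : ℕ) (ω : Conf E) => rhoN (phiOf γ a) (upd0 ω b₀) (upd0 ω a₀) n)
      (fun ω => Real.log (γ ({0} : Finset ℤ) (upd0 ω b₀) / γ ({0} : Finset ℤ) (upd0 ω a₀)))
      atTop :=
  rhoN_phiOf_eq_log_ratio_general γ hγ hTI a a₀ b₀

end GP
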